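/- For every ε > 0 there exists D such that for all integers d ≥ D: sup_{t∈ℝ} | σ̃_0((−∞,t]) − σ_sc((−∞,t]) | ≤ (1+ε) · 2/(π·d), where σ̃_0 is the rescaled Kesten–McKay measure of degree d and σ_sc is the semicircle measure. -/

import Mathlib

open MeasureTheory Filter

noncomputable section

/-- The density of the Kesten–McKay measure of degree `d`. -/
def kmDensity (d : ℕ) (l : ℝ) : ℝ :=
  if l ^ 2 < 4 * ((d : ℝ) - 1) then
    ((d : ℝ) / (2 * Real.pi)) * Real.sqrt (4 * ((d : ℝ) - 1) - l ^ 2) / ((d : ℝ) ^ 2 - l ^ 2)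
  else 0

/-- The cumulative distribution function `σ₀((-∞, t])` of the Kesten–McKay measure. -/
def kmCDF (d : ℕ) (t : ℝ) : ℝ := ∫ l in Set.Iic t, kmDensity d l

/-- The Kesten–McKay measure of degree `d`. -/
def kmMeasure (d : ℕ) : Measure ℝ :=
  MeasureTheory.volume.withDensity fun l => ENNReal.ofReal (kmDensity d l)

/-- The bound `γ_d` on the density of the Kesten–McKay measure. -/
def gammaD (d : ℕ) : ℝ :=
  if d ≤ 6 then (d : ℝ) / (4 * Real.pi * Real.sqrt ((d : ℝ) ^ 2 - 4 * ((d : ℝ) - 1)))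
  else Real.sqrt ((d : ℝ) - 1) / ((d : ℝ) * Real.pi)

/-- The density of the rescaled Kesten–McKay measure of degree `d`. -/
def kmrDensity (d : ℕ) (l : ℝ) : ℝ :=
  if l ^ 2 < 1 then
    (2 / Real.pi) * (((d : ℝ) * ((d : ℝ) - 1)) / ((d : ℝ) ^ 2 - 4 * ((d : ℝ) - 1) * l ^ 2)) *
      Real.sqrt (1 - l ^ 2)
  else 0

/-- The CDF of the rescaled Kesten–McKay measure. -/
def kmrCDF (d : ℕ) (t : ℝ) : ℝ := ∫ l in Set.Iic t, kmrDensity d l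

/-- The density of the semicircle measure. -/
def scDensity (l : ℝ) : ℝ := if l ^ 2 < 1 then (2 / Real.pi) * Real.sqrt (1 - l ^ 2) else 0

/-- The CDF of the semicircle measure. -/
def scCDF (t : ℝ) : ℝ := ∫ l in Set.Iic t, scDensity l

/-- The semicircle measure. -/
def scMeasure : Measure ℝ :=
  MeasureTheory.volume.withDensity fun l => ENNReal.ofReal (scDensity l)

/-- The bound `γ̃_d` on the density of the rescaled Kesten–McKay measure. -/
def gammaTilde (d : ℕ) : ℝ :=
  if d ≤ 6 then
    (d : ℝ) * Real.sqrt ((d : ℝ) - 1) /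
      (2 * Real.pi * Real.sqrt ((d : ℝ) ^ 2 - 4 * ((d : ℝ) - 1)))
  else 2 * ((d : ℝ) - 1) / (Real.pi * (d : ℝ))

/-- The Stieltjes transform `Γ_{𝒯_d}(z) = ∫ (λ - z)⁻¹ σ₀(dλ)` of the Kesten–McKay measure. -/
def kmStieltjes (d : ℕ) (z : ℂ) : ℂ := ∫ l : ℝ, ((l : ℂ) - z)⁻¹ ∂(kmMeasure d)

/-- The Stieltjes transform `Γ_sc(z) = ∫ (λ - z)⁻¹ σ_sc(dλ)` of the semicircle measure. -/
def scStieltjes (z : ℂ) : ℂ := ∫ l : ℝ, ((l : ℂ) - z)⁻¹ ∂scMeasure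


/-! The rescaled Kesten–McKay density is the semicircle density times the ratio
`R(λ) = d(d-1)/(d² - 4(d-1)λ²)`. Writing the denominator as `(d-2)² + 4(d-1)(1-λ²)` gives the
one-sided bounds `R - 1 ≤ 4(d-1)λ⁴/(d-2)²` and `1 - R ≤ (4(d-1)(1/2-λ²)² + 1)/(d-2)²` on `(-1,1)`.
Integrated against the semicircle law (whose moments of order 0, 2, 4 are 1, 1/4, 1/8) they bound
the difference of the two CDFs at any point by `(d+1)/(2(d-2)²)`, which is below `2/(πd)` once
`d ≥ 22`. -/

open Real intervalIntegral Set

theorem integral_pow_mul_sqrt_one_sub_sq (k : ℕ) :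
    ∫ x in (-1 : ℝ)..1, x ^ k * √(1 - x ^ 2) = (∫ x in -(π / 2)..π / 2, sin x ^ k) / (k + 2) := by
  have hsubst : ∫ x in (-1 : ℝ)..1, x ^ k * √(1 - x ^ 2)
      = ∫ x in -(π / 2)..π / 2, sin x ^ k * cos x ^ 2 := by
    calc _ = ∫ x in sin (-(π / 2))..sin (π / 2), x ^ k * √(1 - x ^ 2) := by
          rw [sin_neg, sin_pi_div_two]
      _ = ∫ x in -(π / 2)..π / 2, sin x ^ k * √(1 - sin x ^ 2) * cos x :=
          (integral_comp_mul_deriv (fun x _ => hasDerivAt_sin x) continuousOn_cos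
            (by fun_prop)).symm
      _ = _ := by
          refine integral_congr fun x hx => ?_
          rw [uIcc_of_le (by linarith [pi_pos])] at hx
          simp only [← cos_eq_sqrt_one_sub_sin_sq hx.1 hx.2]
          ring
  have hsplit : ∫ x in -(π / 2)..π / 2, sin x ^ k * cos x ^ 2
      = (∫ x in -(π / 2)..π / 2, sin x ^ k) - ∫ x in -(π / 2)..π / 2, sin x ^ (k + 2) := by
    rw [← intervalIntegral.integral_sub
      ((by fun_prop : Continuous fun x => sin x ^ k).intervalIntegrable _ _)
      ((by fun_prop : Continuous fun x => sin x ^ (k + 2)).intervalIntegrable _ _)]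
    exact integral_congr fun x _ => by simp only [cos_sq', pow_add]; ring
  rw [hsubst, hsplit, integral_sin_pow]
  simp only [cos_neg, cos_pi_div_two]
  field_simp
  ring

theorem integral_sqrt_one_sub_sq_mul_quartic (α β γ : ℝ) :
    ∫ x in (-1 : ℝ)..1, √(1 - x ^ 2) * (α + β * x ^ 2 + γ * x ^ 4)
      = π / 2 * α + π / 8 * β + π / 16 * γ := by
  have hmoment (k : ℕ) (a : ℝ) :
      ∫ x in (-1 : ℝ)..1, a * (x ^ k * √(1 - x ^ 2))
        = a * ((∫ x in -(π / 2)..π / 2, sin x ^ k) / (k + 2)) := by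
    rw [intervalIntegral.integral_const_mul, integral_pow_mul_sqrt_one_sub_sq]
  have hint (k : ℕ) (a : ℝ) :
      IntervalIntegrable (fun x : ℝ => a * (x ^ k * √(1 - x ^ 2))) volume (-1) 1 :=
    (by fun_prop : Continuous fun x : ℝ => a * (x ^ k * √(1 - x ^ 2))).intervalIntegrable _ _
  calc _ = ∫ x in (-1 : ℝ)..1, α * (x ^ 0 * √(1 - x ^ 2)) + β * (x ^ 2 * √(1 - x ^ 2))
        + γ * (x ^ 4 * √(1 - x ^ 2)) := integral_congr fun x _ => by ring
    _ = _ := by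
      rw [intervalIntegral.integral_add ((hint 0 α).add (hint 2 β)) (hint 4 γ),
        intervalIntegral.integral_add (hint 0 α) (hint 2 β), hmoment, hmoment, hmoment,
        integral_sin_pow, integral_sin_pow, integral_sin_pow]
      simp only [sin_neg, cos_neg, cos_pi_div_two]
      norm_num
      ring

theorem setIntegral_sub_setIntegral_le {α : Type*} [MeasurableSpace α] {μ : Measure α}
    {f g p : α → ℝ} (hf : Integrable f μ) (hg : Integrable g μ) (hp : Integrable p μ)
    (hp₀ : 0 ≤ p) (hfg : ∀ x, f x - g x ≤ p x) (s : Set α) :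
    ∫ x in s, f x ∂μ - ∫ x in s, g x ∂μ ≤ ∫ x, p x ∂μ :=
  calc ∫ x in s, f x ∂μ - ∫ x in s, g x ∂μ = ∫ x in s, (f x - g x) ∂μ :=
        (integral_sub hf.integrableOn hg.integrableOn).symm
    _ ≤ ∫ x in s, p x ∂μ := setIntegral_mono (hf.sub hg).integrableOn hp.integrableOn hfg
    _ ≤ ∫ x, p x ∂μ := setIntegral_le_integral hp (Eventually.of_forall hp₀)

theorem km_ratio_sub_one_le {c x : ℝ} (hc : 2 < c) (hx : x ^ 2 ≤ 1) :
    c * (c - 1) / (c ^ 2 - 4 * (c - 1) * x ^ 2) - 1 ≤ 4 * (c - 1) * x ^ 4 / (c - 2) ^ 2 := by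
  have ha : 0 ≤ 4 * (c - 1) := by linarith
  have h2 : 0 < (c - 2) ^ 2 := pow_pos (by linarith) 2
  have hD : 0 < c ^ 2 - 4 * (c - 1) * x ^ 2 := by nlinarith
  rw [div_sub_one hD.ne', div_le_div_iff₀ hD h2]
  linear_combination
    mul_nonneg (mul_nonneg ha (sq_nonneg (x ^ 2))) (mul_nonneg ha (sub_nonneg.2 hx)) +
      mul_nonneg (add_nonneg (mul_nonneg ha (sq_nonneg (x ^ 2 - 1 / 2))) zero_le_one) h2.le

theorem one_sub_km_ratio_le {c x : ℝ} (hc : 2 < c) (hx : x ^ 2 ≤ 1) :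
    1 - c * (c - 1) / (c ^ 2 - 4 * (c - 1) * x ^ 2)
      ≤ (4 * (c - 1) * (1 / 2 - x ^ 2) ^ 2 + 1) / (c - 2) ^ 2 := by
  have ha : 0 ≤ 4 * (c - 1) := by linarith
  have h2 : 0 < (c - 2) ^ 2 := pow_pos (by linarith) 2
  have hD : 0 < c ^ 2 - 4 * (c - 1) * x ^ 2 := by nlinarith
  rw [one_sub_div hD.ne', div_le_div_iff₀ hD h2]
  linear_combination
    mul_nonneg (add_nonneg (mul_nonneg ha (sq_nonneg (1 / 2 - x ^ 2))) zero_le_one)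
        (mul_nonneg ha (sub_nonneg.2 hx)) +
      mul_nonneg (mul_nonneg ha (sq_nonneg (x ^ 2))) h2.le

theorem scDensity_eq_indicator :
    scDensity = (Ioo (-1 : ℝ) 1).indicator fun l => 2 / π * √(1 - l ^ 2) := by
  ext l
  have hmem : l ∈ Ioo (-1 : ℝ) 1 ↔ l ^ 2 < 1 := by
    rw [mem_Ioo, ← abs_lt, sq_lt_one_iff_abs_lt_one]
  by_cases h : l ^ 2 < 1
  · rw [scDensity, if_pos h, indicator_of_mem (hmem.2 h)]
  · rw [scDensity, if_neg h, indicator_of_notMem (mt hmem.1 h)]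

theorem scDensity_nonneg (l : ℝ) : 0 ≤ scDensity l := by
  rw [scDensity_eq_indicator]
  exact indicator_nonneg (fun l _ => by positivity) l

theorem integrable_scDensity_mul {F : ℝ → ℝ} (hF : ContinuousOn F (Icc (-1) 1)) :
    Integrable fun l => scDensity l * F l := by
  simp only [scDensity_eq_indicator, ← indicator_mul_left]
  rw [integrable_indicator_iff measurableSet_Ioo]
  exact ((ContinuousOn.mul (by fun_prop) hF).integrableOn_compact isCompact_Icc).mono_set
    Ioo_subset_Icc_self

theorem integral_scDensity_mul (F : ℝ → ℝ) :
    ∫ l, scDensity l * F l = 2 / π * ∫ l in (-1 : ℝ)..1, √(1 - l ^ 2) * F l := by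
  simp only [scDensity_eq_indicator, ← indicator_mul_left]
  rw [MeasureTheory.integral_indicator measurableSet_Ioo, ← integral_Ioc_eq_integral_Ioo,
    ← intervalIntegral.integral_of_le (by norm_num), ← intervalIntegral.integral_const_mul]
  exact integral_congr fun l _ => by ring

theorem scDensity_mul_le_scDensity_mul {F G : ℝ → ℝ} (h : ∀ l, l ^ 2 < 1 → F l ≤ G l) (l : ℝ) :
    scDensity l * F l ≤ scDensity l * G l := by
  by_cases hl : l ^ 2 < 1
  · exact mul_le_mul_of_nonneg_left (h l hl) (scDensity_nonneg l)
  · simp [scDensity, hl]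

theorem kmrDensity_eq_scDensity_mul (d : ℕ) (l : ℝ) :
    kmrDensity d l = scDensity l * ((d * (d - 1)) / (d ^ 2 - 4 * (d - 1) * l ^ 2)) := by
  unfold kmrDensity scDensity
  split_ifs <;> ring

theorem integral_scDensity_mul_quartic (α β γ : ℝ) :
    ∫ l, scDensity l * (α + β * l ^ 2 + γ * l ^ 4) = α + β / 4 + γ / 8 := by
  rw [integral_scDensity_mul, integral_sqrt_one_sub_sq_mul_quartic]
  field_simp
  ring

theorem integrable_scDensity : Integrable scDensity := by
  simpa using integrable_scDensity_mul (F := 1) continuousOn_const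

theorem integrable_kmrDensity {d : ℕ} (hd : 3 ≤ d) : Integrable (kmrDensity d) := by
  have hc : (2 : ℝ) < d := by exact_mod_cast hd
  rw [funext (kmrDensity_eq_scDensity_mul d)]
  refine integrable_scDensity_mul (continuousOn_const.div (by fun_prop) fun l hl => ?_)
  have hl' : l ^ 2 ≤ 1 := by nlinarith [hl.1, hl.2]
  nlinarith

theorem kmrCDF_sub_scCDF_le {d : ℕ} (hd : 3 ≤ d) (t : ℝ) :
    kmrCDF d t - scCDF t ≤ (d - 1) / (2 * (d - 2) ^ 2) := by
  have hc : (2 : ℝ) < d := by exact_mod_cast hd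
  set c : ℝ := (d : ℝ)
  have hbound : ∫ l, scDensity l * (4 * (c - 1) * l ^ 4 / (c - 2) ^ 2)
      = (c - 1) / (2 * (c - 2) ^ 2) := by
    calc _ = ∫ l, scDensity l * (0 + 0 * l ^ 2 + 4 * (c - 1) / (c - 2) ^ 2 * l ^ 4) := by
          congr 1; ext l; ring
      _ = _ := by
          rw [integral_scDensity_mul_quartic]
          field_simp
          ring
  have hc₁ : 0 ≤ c - 1 := by linarith
  refine (setIntegral_sub_setIntegral_le (integrable_kmrDensity hd) integrable_scDensity
    (integrable_scDensity_mul (by fun_prop)) (fun l => mul_nonneg (scDensity_nonneg l) ?_)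
    (fun l => ?_) (Iic t)).trans_eq hbound
  · positivity
  · rw [kmrDensity_eq_scDensity_mul, ← mul_sub_one]
    exact scDensity_mul_le_scDensity_mul (fun l hl => km_ratio_sub_one_le hc hl.le) l

theorem scCDF_sub_kmrCDF_le {d : ℕ} (hd : 3 ≤ d) (t : ℝ) :
    scCDF t - kmrCDF d t ≤ (d + 1) / (2 * (d - 2) ^ 2) := by
  have hc : (2 : ℝ) < d := by exact_mod_cast hd
  set c : ℝ := (d : ℝ)
  have hbound : ∫ l, scDensity l * ((4 * (c - 1) * (1 / 2 - l ^ 2) ^ 2 + 1) / (c - 2) ^ 2)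
      = (c + 1) / (2 * (c - 2) ^ 2) := by
    calc _ = ∫ l, scDensity l * (c / (c - 2) ^ 2 + -(4 * (c - 1)) / (c - 2) ^ 2 * l ^ 2
          + 4 * (c - 1) / (c - 2) ^ 2 * l ^ 4) := by
          congr 1; ext l; ring
      _ = _ := by
          rw [integral_scDensity_mul_quartic]
          field_simp
          ring
  have hc₁ : 0 ≤ c - 1 := by linarith
  refine (setIntegral_sub_setIntegral_le integrable_scDensity (integrable_kmrDensity hd)
    (integrable_scDensity_mul (by fun_prop)) (fun l => mul_nonneg (scDensity_nonneg l) ?_)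
    (fun l => ?_) (Iic t)).trans_eq hbound
  · positivity
  · rw [kmrDensity_eq_scDensity_mul, ← mul_one_sub]
    exact scDensity_mul_le_scDensity_mul (fun l hl => one_sub_km_ratio_le hc hl.le) l

theorem abs_kmrCDF_sub_scCDF_le {d : ℕ} (hd : 3 ≤ d) (t : ℝ) :
    |kmrCDF d t - scCDF t| ≤ (d + 1) / (2 * (d - 2) ^ 2) := by
  rw [abs_sub_le_iff]
  exact ⟨(kmrCDF_sub_scCDF_le hd t).trans (by gcongr; linarith), scCDF_sub_kmrCDF_le hd t⟩

theorem add_one_div_two_mul_sub_two_sq_le {c : ℝ} (hc : 22 ≤ c) :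
    (c + 1) / (2 * (c - 2) ^ 2) ≤ 2 / (π * c) := by
  have hπ := pi_lt_d2
  have hπ₀ := pi_pos
  rw [div_le_div_iff₀ (by nlinarith) (by positivity)]
  nlinarith

/-- For large degree `d`, the CDF of the rescaled Kesten–McKay measure is uniformly within
`(1+ε)·2/(πd)` of the semicircle CDF. -/
theorem stmt18 (ε : ℝ) (hε : 0 < ε) :
    ∃ D : ℕ, ∀ d : ℕ, D ≤ d → ∀ t : ℝ,
      |kmrCDF d t - scCDF t| ≤ (1 + ε) * (2 / (Real.pi * (d : ℝ))) := by
  refine ⟨22, fun d hd t => ?_⟩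
  calc |kmrCDF d t - scCDF t| ≤ (d + 1) / (2 * (d - 2) ^ 2) :=
        abs_kmrCDF_sub_scCDF_le (by omega) t
    _ ≤ 2 / (π * d) := add_one_div_two_mul_sub_two_sq_le (by exact_mod_cast hd)
    _ ≤ (1 + ε) * (2 / (π * d)) := le_mul_of_one_le_left (by positivity) (by linarith)
end
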